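/- Let n ≥ 3 and suppose a_n = a_{n+1} = a_{n+2} = 1. Then 2q_n and 2q_{n+1} are two successive elements of 𝔔(α). -/

import Mathlib

open Filter Real Set

/-- Iterates of the Gauss map starting from `α`: `x₀ = α`, `x_{n+1} = 1 / fract (xₙ)`. -/
noncomputable def gaussIter (α : ℝ) : ℕ → ℝ
  | 0 => α
  | n + 1 => (Int.fract (gaussIter α n))⁻¹

/-- Partial quotients of the continued fraction `α = [a₀; a₁, a₂, …]`. -/
noncomputable def cfA (α : ℝ) (n : ℕ) : ℤ := ⌊gaussIter α n⌋

/-- Denominators of convergents, with shifted index: `cfQ α 0 = q₋₁ = 0`,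
`cfQ α 1 = q₀ = 1`, and `cfQ α (n+1) = qₙ` where `qₙ = aₙ q_{n-1} + q_{n-2}`. -/
noncomputable def cfQ (α : ℝ) : ℕ → ℤ
  | 0 => 0
  | 1 => 1
  | n + 2 => cfA α (n + 1) * cfQ α (n + 1) + cfQ α n

/-- Numerators of convergents, with shifted index: `cfP α 0 = p₋₁ = 1`,
`cfP α 1 = p₀ = ⌊α⌋`, and `cfP α (n+1) = pₙ` where `pₙ = aₙ p_{n-1} + p_{n-2}`. -/
noncomputable def cfP (α : ℝ) : ℕ → ℤ
  | 0 => 1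
  | 1 => ⌊α⌋
  | n + 2 => cfA α (n + 1) * cfP α (n + 1) + cfP α n

/-- `qₙ`, the denominator of the `n`-th convergent of `α`. -/
noncomputable def cfDen (α : ℝ) (n : ℕ) : ℤ := cfQ α (n + 1)

/-- `pₙ`, the numerator of the `n`-th convergent of `α`. -/
noncomputable def cfNum (α : ℝ) (n : ℕ) : ℤ := cfP α (n + 1)

/-- `ξₙ = |qₙ α − pₙ|`. -/
noncomputable def cfXi (α : ℝ) (n : ℕ) : ℝ := |(cfDen α n : ℝ) * α - (cfNum α n : ℝ)|

/-- `ψ_α(t) = min { ‖qα‖ : q ∈ ℤ, 1 ≤ q ≤ t }`. -/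
noncomputable def psiFn (α t : ℝ) : ℝ :=
  sInf {x : ℝ | ∃ p q : ℤ, 1 ≤ q ∧ (q : ℝ) ≤ t ∧ x = |(q : ℝ) * α - (p : ℝ)|}

/-- `ψ_α^[2](t)`: the same minimum but over pairs `(p,q)` that are not `(pₙ,qₙ)` for any `n ≥ 0`. -/
noncomputable def psi2Fn (α t : ℝ) : ℝ :=
  sInf {x : ℝ | ∃ p q : ℤ, 1 ≤ q ∧ (q : ℝ) ≤ t ∧
    (∀ n : ℕ, ¬(p = cfNum α n ∧ q = cfDen α n)) ∧ x = |(q : ℝ) * α - (p : ℝ)|}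

/-- `ψ_α^[2]*(t)`: the same minimum but over pairs `(p,q)` with `p/q ≠ pₙ/qₙ` for all `n ≥ 0`. -/
noncomputable def psi2sFn (α t : ℝ) : ℝ :=
  sInf {x : ℝ | ∃ p q : ℤ, 1 ≤ q ∧ (q : ℝ) ≤ t ∧
    (∀ n : ℕ, (p : ℝ) / (q : ℝ) ≠ (cfNum α n : ℝ) / (cfDen α n : ℝ)) ∧
    x = |(q : ℝ) * α - (p : ℝ)|}

/-- `λ(α) = liminf_{t→∞} t · ψ_α(t)`. -/
noncomputable def lamOf (α : ℝ) : ℝ := Filter.liminf (fun t : ℝ => t * psiFn α t) Filter.atTop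

/-- `𝔨(α) = liminf_{t→∞} t · ψ_α^[2](t)`. -/
noncomputable def kOf (α : ℝ) : ℝ := Filter.liminf (fun t : ℝ => t * psi2Fn α t) Filter.atTop

/-- `𝔨*(α) = liminf_{t→∞} t · ψ_α^[2]*(t)`. -/
noncomputable def ksOf (α : ℝ) : ℝ := Filter.liminf (fun t : ℝ => t * psi2sFn α t) Filter.atTop

/-- `α` and `β` are equivalent: `β = (aα+b)/(cα+d)` with `a,b,c,d ∈ ℤ`, `|ad − bc| = 1`. -/
def CFEquiv (α β : ℝ) : Prop :=
  ∃ a b c d : ℤ, |a * d - b * c| = 1 ∧ β = ((a : ℝ) * α + (b : ℝ)) / ((c : ℝ) * α + (d : ℝ))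

/-- The spectrum `𝕃₂ = {𝔨(α) : α irrational}`. -/
def L2 : Set ℝ := {x : ℝ | ∃ α : ℝ, Irrational α ∧ kOf α = x}

/-- The spectrum `𝕃₂* = {𝔨*(α) : α irrational}`. -/
def L2s : Set ℝ := {x : ℝ | ∃ α : ℝ, Irrational α ∧ ksOf α = x}

/-- `𝔔(α)`: the set of positive integers at which `ψ_α^[2]` is discontinuous. -/
def QSet (α : ℝ) : Set ℤ := {m : ℤ | 0 < m ∧ ¬ ContinuousAt (psi2Fn α) (m : ℝ)}

/-- `𝔛(α)`: the set of positive integers at which `ψ_α^[2]*` is discontinuous. -/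
def XSet (α : ℝ) : Set ℤ := {m : ℤ | 0 < m ∧ ¬ ContinuousAt (psi2sFn α) (m : ℝ)}

/-- The members of the list `l` are successive elements of `S`: they belong to `S`,
are listed in increasing order, and no element of `S` lies strictly between
consecutive listed ones. -/
def SuccessiveIn (S : Set ℤ) (l : List ℤ) : Prop :=
  (∀ x ∈ l, x ∈ S) ∧ l.Chain' (fun x y => x < y ∧ ∀ z ∈ S, ¬(x < z ∧ z < y))

/-- `κ¹ₙ = (q_{n-2} + q_{n-1})(ξ_{n-2} − ξ_{n-1})`. -/
noncomputable def kap1 (α : ℝ) (n : ℕ) : ℝ :=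
  ((cfDen α (n - 2) + cfDen α (n - 1) : ℤ) : ℝ) * (cfXi α (n - 2) - cfXi α (n - 1))

/-- `κ²ₙ = (qₙ − q_{n-1})(ξ_{n-1} + ξₙ)`. -/
noncomputable def kap2 (α : ℝ) (n : ℕ) : ℝ :=
  ((cfDen α n - cfDen α (n - 1) : ℤ) : ℝ) * (cfXi α (n - 1) + cfXi α n)

/-- `κ³ₙ = (2q_{n-2} + q_{n-1})(2ξ_{n-2} − ξ_{n-1})`. -/
noncomputable def kap3 (α : ℝ) (n : ℕ) : ℝ :=
  ((2 * cfDen α (n - 2) + cfDen α (n - 1) : ℤ) : ℝ) * (2 * cfXi α (n - 2) - cfXi α (n - 1))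

/-- `κ⁴ₙ = 4 q_{n-1} ξ_{n-1}`. -/
noncomputable def kap4 (α : ℝ) (n : ℕ) : ℝ :=
  ((4 * cfDen α (n - 1) : ℤ) : ℝ) * cfXi α (n - 1)

/-!
Write `(p, q)` in the basis of two consecutive convergent vectors `vₖ = (pₖ, qₖ)`, `vₖ₊₁`.
Since `qₖα − pₖ` alternates in sign, `|qα − p| = |x ξₖ − y ξₖ₊₁|` for `(p, q) = x vₖ + y vₖ₊₁`.
When `aₖ = aₖ₊₁ = 1`, the only lattice points with `1 ≤ q < 2qₖ` and `|qα − p| < 2ξₖ₋₁ = 2ξₖ + 2ξₖ₊₁`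
are the convergents `vₖ₋₂, …, vₖ₊₁`, so `ψ^[2] ≥ 2ξₖ₋₁` before `2qₖ`; the non-convergent point
`2vₖ` gives `ψ^[2](2qₖ) ≤ 2ξₖ < 2ξₖ₋₁`. So `ψ^[2]` jumps at `2qₙ` and at `2qₙ₊₁`, and is
constant, equal to `2ξₙ`, in between.
-/

open Topology

/-- With `Qᵢ = q_{j+i}` and `a_{j+2} = a_{j+3} = 1`, the four excluded pairs are the coordinates
of `v_{j+2}, v_{j+3}, v_{j+1}, v_j` in the basis `v_{j+2}, v_{j+3}`. -/
lemma coeff_cases_of_lt_two_mul {Q₀ Q₁ Q₂ Q₃ x y : ℤ} (h₀ : 1 ≤ Q₀) (h₀₁ : Q₀ ≤ Q₁)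
    (h₂ : Q₂ = Q₁ + Q₀) (h₃ : Q₃ = Q₂ + Q₁)
    (hq : 1 ≤ x * Q₂ + y * Q₃) (hq' : x * Q₂ + y * Q₃ < 2 * Q₂)
    (h10 : ¬(x = 1 ∧ y = 0)) (h01 : ¬(x = 0 ∧ y = 1))
    (h11 : ¬(x = -1 ∧ y = 1)) (h21 : ¬(x = 2 ∧ y = -1)) :
    (3 ≤ x ∧ y ≤ -1) ∨ (x ≤ -2 ∧ 2 ≤ y) := by
  subst h₂ h₃
  obtain hy | rfl | hy := lt_trichotomy y 0
  · have : 1 ≤ x + y := by nlinarith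
    omega
  · have : x = 1 := by nlinarith
    omega
  obtain hx | rfl | rfl | hx : x ≤ -2 ∨ x = -1 ∨ x = 0 ∨ 1 ≤ x := by omega
  · obtain rfl | hy : y = 1 ∨ 2 ≤ y := by omega
    · nlinarith
    · omega
  · obtain rfl | hy : y = 1 ∨ 2 ≤ y := by omega
    · omega
    · nlinarith
  · obtain rfl | hy : y = 1 ∨ 2 ≤ y := by omega
    · omega
    · nlinarith
  · nlinarith

noncomputable def cfDelta (α : ℝ) (k : ℕ) : ℝ := (cfDen α k : ℝ) * α - cfNum α k

section ContinuedFraction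

variable {α : ℝ}

lemma cfDen_add_two (k : ℕ) : cfDen α (k + 2) = cfA α (k + 2) * cfDen α (k + 1) + cfDen α k :=
  rfl

lemma cfNum_add_two (k : ℕ) : cfNum α (k + 2) = cfA α (k + 2) * cfNum α (k + 1) + cfNum α k :=
  rfl

lemma cfDen_one : cfDen α 1 = cfA α 1 := by simp [cfDen, cfQ]

lemma cfDelta_add_two (k : ℕ) :
    cfDelta α (k + 2) = cfA α (k + 2) * cfDelta α (k + 1) + cfDelta α k := by
  simp only [cfDelta, cfDen_add_two, cfNum_add_two]
  push_cast
  ring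

lemma abs_cfDelta (k : ℕ) : |cfDelta α k| = cfXi α k := rfl

lemma irrational_gaussIter (hα : Irrational α) (k : ℕ) : Irrational (gaussIter α k) := by
  induction k with
  | zero => exact hα
  | succ k ih => exact (ih.sub_intCast ⌊gaussIter α k⌋).inv

lemma fract_gaussIter_pos (hα : Irrational α) (k : ℕ) : 0 < Int.fract (gaussIter α k) :=
  (Int.fract_nonneg _).lt_of_ne fun h => ((irrational_gaussIter hα k).sub_intCast _).ne_zero h.symm

lemma fract_gaussIter_succ (k : ℕ) :
    Int.fract (gaussIter α (k + 1)) = (Int.fract (gaussIter α k))⁻¹ - cfA α (k + 1) :=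
  rfl

lemma one_le_cfA (hα : Irrational α) (k : ℕ) : 1 ≤ cfA α (k + 1) := by
  refine Int.le_floor.2 ?_
  rw [Int.cast_one]
  exact one_le_inv₀ (fract_gaussIter_pos hα k) |>.2 (Int.fract_lt_one _).le

lemma cfDelta_zero : cfDelta α 0 = Int.fract α := by
  simp [cfDelta, cfDen, cfNum, cfQ, cfP, ← Int.self_sub_floor]

lemma cfDelta_succ (hα : Irrational α) (k : ℕ) :
    cfDelta α (k + 1) = -Int.fract (gaussIter α (k + 1)) * cfDelta α k := by
  induction k with
  | zero =>
    have hθ : Int.fract α ≠ 0 := (fract_gaussIter_pos hα 0).ne'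
    have hδ₁ : cfDelta α 1 = cfA α 1 * Int.fract α - 1 := by
      simp [cfDelta, cfDen, cfNum, cfQ, cfP, ← Int.self_sub_floor]
      ring
    rw [hδ₁, fract_gaussIter_succ, cfDelta_zero, gaussIter]
    field_simp
    ring
  | succ k ih =>
    have hθ := (fract_gaussIter_pos hα (k + 1)).ne'
    rw [cfDelta_add_two, fract_gaussIter_succ, ih]
    field_simp
    ring

lemma cfXi_succ (hα : Irrational α) (k : ℕ) :
    cfXi α (k + 1) = Int.fract (gaussIter α (k + 1)) * cfXi α k := by
  rw [← abs_cfDelta, cfDelta_succ hα, abs_mul, abs_neg,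
    abs_of_pos (fract_gaussIter_pos hα _), abs_cfDelta]

lemma cfXi_pos (hα : Irrational α) (k : ℕ) : 0 < cfXi α k := by
  induction k with
  | zero => rw [← abs_cfDelta, cfDelta_zero]; exact abs_pos.2 (fract_gaussIter_pos hα 0).ne'
  | succ k ih => rw [cfXi_succ hα]; exact mul_pos (fract_gaussIter_pos hα _) ih

lemma cfXi_succ_lt (hα : Irrational α) (k : ℕ) : cfXi α (k + 1) < cfXi α k := by
  rw [cfXi_succ hα]
  exact mul_lt_of_lt_one_left (cfXi_pos hα k) (Int.fract_lt_one _)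

/-- Consecutive `cfDelta` have opposite signs. -/
lemma abs_mul_cfDelta_add_mul_cfDelta_succ (hα : Irrational α) (k : ℕ) (x y : ℝ) :
    |x * cfDelta α k + y * cfDelta α (k + 1)| = |x * cfXi α k - y * cfXi α (k + 1)| := by
  rw [cfXi_succ hα, cfDelta_succ hα, ← abs_cfDelta,
    show x * cfDelta α k + y * (-Int.fract (gaussIter α (k + 1)) * cfDelta α k)
      = (x - y * Int.fract (gaussIter α (k + 1))) * cfDelta α k by ring,
    show x * |cfDelta α k| - y * (Int.fract (gaussIter α (k + 1)) * |cfDelta α k|)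
      = (x - y * Int.fract (gaussIter α (k + 1))) * |cfDelta α k| by ring,
    abs_mul, abs_mul, abs_abs]

lemma cfXi_eq_cfA_mul_add (hα : Irrational α) (k : ℕ) :
    cfXi α k = cfA α (k + 2) * cfXi α (k + 1) + cfXi α (k + 2) := by
  have hδ : cfDelta α k = -cfA α (k + 2) * cfDelta α (k + 1) + 1 * cfDelta α (k + 1 + 1) := by
    rw [cfDelta_add_two]
    ring
  have ha : (1 : ℝ) ≤ cfA α (k + 2) := by exact_mod_cast one_le_cfA hα (k + 1)
  rw [← abs_cfDelta, hδ, abs_mul_cfDelta_add_mul_cfDelta_succ hα,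
    abs_of_neg (by nlinarith [cfXi_pos hα (k + 1), cfXi_pos hα (k + 2)])]
  ring

lemma one_le_cfDen (hα : Irrational α) : ∀ k, 1 ≤ cfDen α k
  | 0 => le_rfl
  | 1 => cfDen_one (α := α) ▸ one_le_cfA hα 0
  | k + 2 => by
    rw [cfDen_add_two]
    nlinarith [one_le_cfA hα (k + 1), one_le_cfDen hα k, one_le_cfDen hα (k + 1)]

lemma cfDen_add_le_cfDen_add_two (hα : Irrational α) (k : ℕ) :
    cfDen α (k + 1) + cfDen α k ≤ cfDen α (k + 2) := by
  rw [cfDen_add_two]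
  nlinarith [one_le_cfA hα (k + 1), one_le_cfDen hα (k + 1)]

lemma cfDen_lt_cfDen_add_two (hα : Irrational α) (k : ℕ) : cfDen α (k + 1) < cfDen α (k + 2) := by
  linarith [cfDen_add_le_cfDen_add_two hα k, one_le_cfDen hα k]

lemma cfDen_monotone (hα : Irrational α) : Monotone (cfDen α) := by
  refine monotone_nat_of_le_succ fun k => ?_
  cases k with
  | zero => exact cfDen_one (α := α) ▸ one_le_cfA hα 0
  | succ k => exact (cfDen_lt_cfDen_add_two hα k).le

lemma cfNum_nonneg (hα : Irrational α) (h0 : 0 < α) : ∀ k, 0 ≤ cfNum α k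
  | 0 => Int.floor_nonneg.2 h0.le
  | 1 => by
    show 0 ≤ cfA α 1 * ⌊α⌋ + 1
    nlinarith [one_le_cfA hα 0, Int.floor_nonneg.2 h0.le]
  | k + 2 => by
    rw [cfNum_add_two]
    nlinarith [one_le_cfA hα (k + 1), cfNum_nonneg hα h0 k, cfNum_nonneg hα h0 (k + 1)]

lemma cfNum_succ_mul_cfDen_sub (k : ℕ) :
    cfNum α (k + 1) * cfDen α k - cfNum α k * cfDen α (k + 1) = (-1) ^ k := by
  induction k with
  | zero => simp [cfNum, cfDen, cfP, cfQ]; ring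
  | succ k ih =>
    rw [cfNum_add_two, cfDen_add_two, pow_succ, ← ih]
    ring

lemma exists_eq_cfNum_cfDen_comb (k : ℕ) (p q : ℤ) : ∃ x y : ℤ,
    p = x * cfNum α k + y * cfNum α (k + 1) ∧ q = x * cfDen α k + y * cfDen α (k + 1) := by
  have hdet := cfNum_succ_mul_cfDen_sub (α := α) k
  have hsq : ((-1 : ℤ) ^ k) * (-1) ^ k = 1 := by rw [← mul_pow]; norm_num
  refine ⟨(-1) ^ k * (q * cfNum α (k + 1) - p * cfDen α (k + 1)),
    (-1) ^ k * (p * cfDen α k - q * cfNum α k), ?_, ?_⟩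
  · linear_combination (-(-1) ^ k * p) * hdet - p * hsq
  · linear_combination (-(-1) ^ k * q) * hdet - q * hsq

lemma two_cfXi_le_abs_sub (hα : Irrational α) {j : ℕ} (ha : cfA α (j + 2) = 1)
    (ha' : cfA α (j + 3) = 1) {p q : ℤ} (hq : 1 ≤ q) (hq' : q < 2 * cfDen α (j + 2))
    (hpq : ∀ k, ¬(p = cfNum α k ∧ q = cfDen α k)) :
    2 * cfXi α (j + 1) ≤ |q * α - p| := by
  obtain ⟨x, y, rfl, rfl⟩ := exists_eq_cfNum_cfDen_comb (α := α) (j + 2) p q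
  have hP₂ : cfNum α (j + 2) = cfNum α (j + 1) + cfNum α j := by rw [cfNum_add_two, ha, one_mul]
  have hP₃ : cfNum α (j + 3) = cfNum α (j + 2) + cfNum α (j + 1) := by
    rw [cfNum_add_two, ha', one_mul]
  have hQ₂ : cfDen α (j + 2) = cfDen α (j + 1) + cfDen α j := by rw [cfDen_add_two, ha, one_mul]
  have hQ₃ : cfDen α (j + 3) = cfDen α (j + 2) + cfDen α (j + 1) := by
    rw [cfDen_add_two, ha', one_mul]
  have hxy := coeff_cases_of_lt_two_mul (one_le_cfDen hα j) (cfDen_monotone hα j.le_succ)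
    hQ₂ hQ₃ hq hq'
    (by rintro ⟨rfl, rfl⟩; exact hpq (j + 2) ⟨by ring, by ring⟩)
    (by rintro ⟨rfl, rfl⟩; exact hpq (j + 3) ⟨by ring, by ring⟩)
    (by rintro ⟨rfl, rfl⟩; exact hpq (j + 1) ⟨by linarith, by linarith⟩)
    (by rintro ⟨rfl, rfl⟩; exact hpq j ⟨by linarith, by linarith⟩)
  have hval : ((x * cfDen α (j + 2) + y * cfDen α (j + 3) : ℤ) : ℝ) * α
      - (x * cfNum α (j + 2) + y * cfNum α (j + 3) : ℤ)
      = x * cfDelta α (j + 2) + y * cfDelta α (j + 3) := by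
    simp only [cfDelta]
    push_cast
    ring
  have hξ : cfXi α (j + 1) = cfXi α (j + 2) + cfXi α (j + 3) := by
    rw [cfXi_eq_cfA_mul_add hα, ha', Int.cast_one, one_mul]
  have hlt := cfXi_succ_lt hα (j + 2)
  have hpos := cfXi_pos hα (j + 3)
  rw [hval, abs_mul_cfDelta_add_mul_cfDelta_succ hα, hξ]
  rcases hxy with ⟨hx, hy⟩ | ⟨hx, hy⟩
  · have hx : (3 : ℝ) ≤ x := by exact_mod_cast hx
    have hy : (y : ℝ) ≤ -1 := by exact_mod_cast hy
    exact le_abs.2 (Or.inl (by nlinarith))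
  · have hx : (x : ℝ) ≤ -2 := by exact_mod_cast hx
    have hy : (2 : ℝ) ≤ y := by exact_mod_cast hy
    exact le_abs.2 (Or.inr (by nlinarith))

lemma psi2Fn_le {t : ℝ} {p q : ℤ} (hq : 1 ≤ q) (hqt : (q : ℝ) ≤ t)
    (hpq : ∀ k, ¬(p = cfNum α k ∧ q = cfDen α k)) : psi2Fn α t ≤ |q * α - p| :=
  csInf_le ⟨0, by rintro _ ⟨_, _, _, _, _, rfl⟩; exact abs_nonneg _⟩ ⟨p, q, hq, hqt, hpq, rfl⟩

lemma le_psi2Fn (hα : Irrational α) (h0 : 0 < α) {t B : ℝ} (ht : 1 ≤ t)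
    (hB : ∀ p q : ℤ, 1 ≤ q → (q : ℝ) ≤ t → (∀ k, ¬(p = cfNum α k ∧ q = cfDen α k)) →
      B ≤ |q * α - p|) :
    B ≤ psi2Fn α t :=
  le_csInf ⟨_, -1, 1, le_rfl, by exact_mod_cast ht,
      fun k h => by linarith [cfNum_nonneg hα h0 k, h.1], rfl⟩
    (by rintro _ ⟨p, q, hq, hqt, hpq, rfl⟩; exact hB p q hq hqt hpq)

lemma cfDen_ne_two_mul_cfDen (hα : Irrational α) {j : ℕ} (ha : cfA α (j + 3) = 1) (k : ℕ) :
    cfDen α k ≠ 2 * cfDen α (j + 2) := by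
  have hQ₃ : cfDen α (j + 3) = cfDen α (j + 2) + cfDen α (j + 1) := by
    rw [cfDen_add_two, ha, one_mul]
  refine (cfDen_monotone hα).ne_of_lt_of_lt_nat (j + 3) ?_ ?_ k
  · linarith [cfDen_lt_cfDen_add_two hα j]
  · linarith [cfDen_add_le_cfDen_add_two hα (j + 2), cfDen_lt_cfDen_add_two hα (j + 1)]

lemma psi2Fn_le_two_cfXi (hα : Irrational α) {j : ℕ} (ha : cfA α (j + 3) = 1) {t : ℝ}
    (ht : 2 * (cfDen α (j + 2) : ℝ) ≤ t) : psi2Fn α t ≤ 2 * cfXi α (j + 2) :=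
  calc psi2Fn α t
    _ ≤ |((2 * cfDen α (j + 2) : ℤ) : ℝ) * α - ((2 * cfNum α (j + 2) : ℤ) : ℝ)| :=
      psi2Fn_le (by linarith [one_le_cfDen hα (j + 2)]) (by push_cast; exact ht)
        fun k h => cfDen_ne_two_mul_cfDen hα ha k h.2.symm
    _ = |2 * cfDelta α (j + 2)| := by
      rw [cfDelta]
      push_cast
      ring_nf
    _ = 2 * cfXi α (j + 2) := by rw [abs_mul, abs_two, abs_cfDelta]

lemma two_cfXi_le_psi2Fn (hα : Irrational α) (h0 : 0 < α) {j : ℕ} (ha : cfA α (j + 2) = 1)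
    (ha' : cfA α (j + 3) = 1) {t : ℝ} (ht : 1 ≤ t) (ht' : t < 2 * (cfDen α (j + 2) : ℝ)) :
    2 * cfXi α (j + 1) ≤ psi2Fn α t :=
  le_psi2Fn hα h0 ht fun _ _ hq hqt hpq =>
    two_cfXi_le_abs_sub hα ha ha' hq (by exact_mod_cast hqt.trans_lt ht') hpq

lemma psi2Fn_eqOn (hα : Irrational α) (h0 : 0 < α) {j : ℕ} (ha : cfA α (j + 3) = 1)
    (ha' : cfA α (j + 4) = 1) :
    EqOn (psi2Fn α) (fun _ => 2 * cfXi α (j + 2))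
      (Ico (2 * (cfDen α (j + 2) : ℝ)) (2 * cfDen α (j + 3))) := fun t ht =>
  le_antisymm (psi2Fn_le_two_cfXi hα ha ht.1) <| two_cfXi_le_psi2Fn (j := j + 1) hα h0 ha ha'
    (by linarith [ht.1, (by exact_mod_cast one_le_cfDen hα (j + 2) : (1 : ℝ) ≤ cfDen α (j + 2))])
    ht.2

lemma not_continuousAt_of_lt {f : ℝ → ℝ} {m B : ℝ} (hm : f m < B)
    (hB : ∀ᶠ t in 𝓝[<] m, B ≤ f t) : ¬ContinuousAt f m := fun hf =>
  hm.not_ge (ge_of_tendsto (hf.tendsto.mono_left nhdsWithin_le_nhds) hB)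

lemma two_mul_cfDen_mem_QSet (hα : Irrational α) (h0 : 0 < α) {j : ℕ} (ha : cfA α (j + 2) = 1)
    (ha' : cfA α (j + 3) = 1) : 2 * cfDen α (j + 2) ∈ QSet α := by
  have hQ : (1 : ℝ) ≤ cfDen α (j + 2) := by exact_mod_cast one_le_cfDen hα (j + 2)
  refine ⟨by linarith [one_le_cfDen hα (j + 2)], ?_⟩
  push_cast
  refine not_continuousAt_of_lt (B := 2 * cfXi α (j + 1))
    ((psi2Fn_le_two_cfXi hα ha' le_rfl).trans_lt (by linarith [cfXi_succ_lt hα (j + 1)])) ?_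
  filter_upwards [Ioo_mem_nhdsLT (sub_one_lt _)] with t ht
  exact two_cfXi_le_psi2Fn hα h0 ha ha' (by linarith [ht.1]) ht.2

end ContinuedFraction

lemma successiveIn_pair {S : Set ℤ} {a b : ℤ} :
    SuccessiveIn S [a, b] ↔ (a ∈ S ∧ b ∈ S) ∧ a < b ∧ ∀ z ∈ S, ¬(a < z ∧ z < b) :=
  and_congr (by simp) List.isChain_pair

theorem stmt15_general (α : ℝ) (hα : Irrational α) (h0 : 0 < α)
    (n : ℕ) (hn : 3 ≤ n) (ha : cfA α n = 1)
    (ha' : cfA α (n + 1) = 1) (ha'' : cfA α (n + 2) = 1) :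
    SuccessiveIn (QSet α) [2 * cfDen α n, 2 * cfDen α (n + 1)] := by
  obtain ⟨j, rfl⟩ : ∃ j, n = j + 2 := ⟨n - 2, by omega⟩
  refine successiveIn_pair.2 ⟨⟨two_mul_cfDen_mem_QSet hα h0 ha ha',
    two_mul_cfDen_mem_QSet (j := j + 1) hα h0 ha' ha''⟩,
    by linarith [cfDen_lt_cfDen_add_two hα (j + 1)], fun z hz hzab => hz.2 ?_⟩
  have hz : (z : ℝ) ∈ Ioo (2 * (cfDen α (j + 2) : ℝ)) (2 * cfDen α (j + 3)) :=
    ⟨by exact_mod_cast hzab.1, by exact_mod_cast hzab.2⟩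
  exact ((psi2Fn_eqOn hα h0 ha' ha'').eventuallyEq_of_mem
    (Ico_mem_nhds_iff.2 hz)).continuousAt

/-- Let `α ∈ (0,1)` be irrational, `n ≥ 3` and
`aₙ = a_{n+1} = a_{n+2} = 1`. Then `2qₙ` and `2q_{n+1}` are two successive elements
of `𝔔(α)`. -/
theorem stmt15 (α : ℝ) (hα : Irrational α) (h0 : 0 < α) (h1 : α < 1)
    (n : ℕ) (hn : 3 ≤ n) (ha : cfA α n = 1)
    (ha' : cfA α (n + 1) = 1) (ha'' : cfA α (n + 2) = 1) :
    SuccessiveIn (QSet α) [2 * cfDen α n, 2 * cfDen α (n + 1)] :=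
  stmt15_general α hα h0 n hn ha ha' ha''
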